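/- Let m be a positive integer, d > 0 and define s_m(x) = √(1 + x²/m)·t(m) for x ∈ [0,d) and s_m(x) = t(m) for x ≥ d. Let c_m denote the corresponding coverage probability function (with b ≡ 0, ρ = 0) and define ν_m = c_m(γ=0) − (1−α). Then 0 ≤ ν_m ≤ c(γ=0; b≡0, s ≡ √(1+d²/m)·t(m), ρ=0) − (1−α), and ν_m → 0 as m → ∞. -/

import Mathlib

/-!
Given `W = w`, the coverage is `∫ (2Φ(w s(|h|/w)) - 1) φ(h - γ) dh`, which is monotone in `s`.
For a constant `s ≡ t` it is `∫ (2Φ(w t) - 1) f_W(w) dw = P(|G / W| < t)`, and by a Gamma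
integral in `w` the ratio `G / W` has the Student `t_m` density, so `s ≡ t(m)` has coverage
exactly `1 - α`. The sandwich `t(m) ≤ s_m ≤ k_m t(m)` with `k_m = √(1 + d²/m)` gives both bounds
on `ν_m`. Finally `Φ(k a) - Φ(a) ≤ (k - 1) a φ(a) ≤ (k - 1) / √(2π)` uniformly in `a ≥ 0`, so the
excess coverage of `k_m t(m)` is at most `2 (k_m - 1) / √(2π) → 0` however `t(m)` behaves.
-/

open MeasureTheory Real Set Filter

/-- Standard normal probability density function. -/
noncomputable def stdPDF (u : ℝ) : ℝ := (Real.sqrt (2 * Real.pi))⁻¹ * Real.exp (-u ^ 2 / 2)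

/-- Standard normal cumulative distribution function. -/
noncomputable def stdCDF (u : ℝ) : ℝ := ∫ t in Set.Iic u, stdPDF t

/-- Density of the chi-squared distribution with `m` degrees of freedom. -/
noncomputable def chisqPDF (m : ℕ) (q : ℝ) : ℝ :=
  if 0 < q then q ^ ((m : ℝ) / 2 - 1) * Real.exp (-q / 2) /
    (2 ^ ((m : ℝ) / 2) * Real.Gamma ((m : ℝ) / 2)) else 0

/-- Density of `W = sqrt(Q/m)` where `Q ~ χ²_m`. -/
noncomputable def fW (m : ℕ) (w : ℝ) : ℝ := 2 * m * w * chisqPDF m (m * w ^ 2)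

/-- Density of the Student t distribution with `m` degrees of freedom. -/
noncomputable def tPDF (m : ℕ) (x : ℝ) : ℝ :=
  Real.Gamma (((m : ℝ) + 1) / 2) / (Real.sqrt (m * Real.pi) * Real.Gamma ((m : ℝ) / 2)) *
    (1 + x ^ 2 / m) ^ (-(((m : ℝ) + 1) / 2))

/-- Coverage probability `c(γ; b ≡ 0, s, ρ = 0)`, i.e.
`P(|G| ≤ W s(|H|/W))` with `G ~ N(0,1)`, `H ~ N(γ,1)`, `W = σ̂/σ` independent. -/
noncomputable def cov0 (m : ℕ) (s : ℝ → ℝ) (γ : ℝ) : ℝ :=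
  ∫ w in Set.Ioi (0 : ℝ),
    (∫ h : ℝ, (2 * stdCDF (w * s (|h| / w)) - 1) * stdPDF (h - γ)) * fW m w

/-- The minimizing half-width function `s_{λ(m)}`. -/
noncomputable def smin (m : ℕ) (tm d x : ℝ) : ℝ :=
  if x < d then Real.sqrt (1 + x ^ 2 / m) * tm else tm

lemma stdPDF_eq_gaussianPDFReal : stdPDF = ProbabilityTheory.gaussianPDFReal 0 1 := by
  ext u
  simp [stdPDF, ProbabilityTheory.gaussianPDFReal]

lemma stdPDF_pos (u : ℝ) : 0 < stdPDF u := by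
  unfold stdPDF
  positivity

@[fun_prop]
lemma continuous_stdPDF : Continuous stdPDF := by
  unfold stdPDF
  fun_prop

lemma integrable_stdPDF : Integrable stdPDF := by
  rw [stdPDF_eq_gaussianPDFReal]
  exact ProbabilityTheory.integrable_gaussianPDFReal 0 1

lemma integral_stdPDF : ∫ u, stdPDF u = 1 := by
  rw [stdPDF_eq_gaussianPDFReal]
  exact ProbabilityTheory.integral_gaussianPDFReal_eq_one 0 one_ne_zero

lemma integral_stdPDF_sub (γ : ℝ) : ∫ h, stdPDF (h - γ) = 1 := by
  rw [integral_sub_right_eq_self (fun h => stdPDF h) γ, integral_stdPDF]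

lemma stdPDF_neg (u : ℝ) : stdPDF (-u) = stdPDF u := by
  simp [stdPDF]

lemma stdPDF_antitoneOn : AntitoneOn stdPDF (Ici 0) := by
  intro a ha b _ hab
  unfold stdPDF
  have : a ^ 2 ≤ b ^ 2 := pow_le_pow_left₀ ha hab 2
  gcongr

lemma mul_stdPDF_le (x : ℝ) : x * stdPDF x ≤ (√(2 * π))⁻¹ := by
  have hx : x ≤ exp (x ^ 2 / 2) := by
    nlinarith [add_one_le_exp (x ^ 2 / 2), sq_nonneg (x - 1)]
  have hx' : x * exp (-x ^ 2 / 2) ≤ 1 := by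
    rw [neg_div, exp_neg, ← div_eq_mul_inv, div_le_one (exp_pos _)]
    exact hx
  calc x * stdPDF x = (√(2 * π))⁻¹ * (x * exp (-x ^ 2 / 2)) := by unfold stdPDF; ring
    _ ≤ (√(2 * π))⁻¹ := mul_le_of_le_one_right (by positivity) hx'

lemma stdCDF_mono : Monotone stdCDF := fun _ _ hab =>
  setIntegral_mono_set integrable_stdPDF.integrableOn
    (.of_forall fun x => (stdPDF_pos x).le) (.of_forall (Iic_subset_Iic.2 hab))

@[fun_prop]
lemma measurable_stdCDF : Measurable stdCDF := stdCDF_mono.measurable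

lemma stdCDF_nonneg (u : ℝ) : 0 ≤ stdCDF u :=
  setIntegral_nonneg measurableSet_Iic fun x _ => (stdPDF_pos x).le

lemma stdCDF_le_one (u : ℝ) : stdCDF u ≤ 1 :=
  integral_stdPDF ▸
    setIntegral_le_integral integrable_stdPDF (.of_forall fun x => (stdPDF_pos x).le)

lemma stdCDF_neg (a : ℝ) : stdCDF (-a) = 1 - stdCDF a := by
  have hreflect : stdCDF (-a) = ∫ x in Ioi a, stdPDF x := by
    rw [stdCDF, ← integral_comp_neg_Ioi]
    simp only [stdPDF_neg]
  have hsplit : stdCDF a + ∫ x in Ioi a, stdPDF x = 1 := by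
    rw [stdCDF, ← setIntegral_union (Iic_disjoint_Ioi le_rfl) measurableSet_Ioi
      integrable_stdPDF.integrableOn integrable_stdPDF.integrableOn, Iic_union_Ioi,
      setIntegral_univ, integral_stdPDF]
  linarith

lemma stdCDF_sub_stdCDF {a b : ℝ} (hab : a ≤ b) :
    stdCDF b - stdCDF a = ∫ x in Ioo a b, stdPDF x := by
  rw [stdCDF, stdCDF, intervalIntegral.integral_Iic_sub_Iic integrable_stdPDF.integrableOn
    integrable_stdPDF.integrableOn, intervalIntegral.integral_of_le hab,
    integral_Ioc_eq_integral_Ioo]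

lemma two_mul_stdCDF_sub_one {a : ℝ} (ha : 0 ≤ a) :
    2 * stdCDF a - 1 = ∫ x in Ioo (-a) a, stdPDF x := by
  rw [← stdCDF_sub_stdCDF (by linarith), stdCDF_neg]
  ring

lemma abs_two_mul_stdCDF_sub_one_le (u : ℝ) : |2 * stdCDF u - 1| ≤ 1 := by
  rw [abs_le]
  constructor <;> linarith [stdCDF_nonneg u, stdCDF_le_one u]

lemma stdCDF_sub_stdCDF_le {a b : ℝ} (ha : 0 ≤ a) (hab : a ≤ b) :
    stdCDF b - stdCDF a ≤ (b - a) * stdPDF a := by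
  rw [stdCDF_sub_stdCDF hab]
  calc ∫ x in Ioo a b, stdPDF x ≤ ∫ _ in Ioo a b, stdPDF a :=
        setIntegral_mono_on integrable_stdPDF.integrableOn
          (integrableOn_const measure_Ioo_lt_top.ne) measurableSet_Ioo
          fun x hx => stdPDF_antitoneOn ha (ha.trans hx.1.le) hx.1.le
    _ = (b - a) * stdPDF a := by
        rw [setIntegral_const, Real.volume_real_Ioo_of_le hab, smul_eq_mul]

lemma stdCDF_mul_sub_stdCDF_le {k a : ℝ} (hk : 1 ≤ k) (ha : 0 ≤ a) :
    stdCDF (k * a) - stdCDF a ≤ (k - 1) * (√(2 * π))⁻¹ :=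
  calc stdCDF (k * a) - stdCDF a ≤ (k * a - a) * stdPDF a :=
        stdCDF_sub_stdCDF_le ha (le_mul_of_one_le_left ha hk)
    _ = (k - 1) * (a * stdPDF a) := by ring
    _ ≤ (k - 1) * (√(2 * π))⁻¹ := mul_le_mul_of_nonneg_left (mul_stdPDF_le a) (by linarith)

lemma integral_rpow_mul_exp_neg_mul_sq {q b : ℝ} (hq : -1 < q) (hb : 0 < b) :
    ∫ x in Ioi (0 : ℝ), x ^ q * exp (-b * x ^ 2) =
      b ^ (-(q + 1) / 2) * (1 / 2) * Gamma ((q + 1) / 2) := by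
  simp_rw [← rpow_two]
  exact integral_rpow_mul_exp_neg_mul_rpow two_pos hq hb

noncomputable def fWConst (m : ℕ) : ℝ :=
  2 * (m : ℝ) ^ ((m : ℝ) / 2) / (2 ^ ((m : ℝ) / 2) * Gamma ((m : ℝ) / 2))

section fW

variable {m : ℕ}

lemma fW_eq (hm : 0 < m) {w : ℝ} (hw : 0 < w) :
    fW m w = fWConst m * w ^ ((m : ℝ) - 1) * exp (-((m : ℝ) / 2) * w ^ 2) := by
  have hmr : (0 : ℝ) < m := by exact_mod_cast hm
  have hpow : ((m : ℝ) * w ^ 2) ^ ((m : ℝ) / 2 - 1) =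
      (m : ℝ) ^ ((m : ℝ) / 2 - 1) * w ^ ((m : ℝ) - 2) := by
    rw [mul_rpow hmr.le (by positivity), ← rpow_natCast w 2, ← rpow_mul hw.le]
    push_cast
    ring_nf
  have hw' : w * w ^ ((m : ℝ) - 2) = w ^ ((m : ℝ) - 1) := by
    rw [show (m : ℝ) - 1 = 1 + ((m : ℝ) - 2) by ring, rpow_add hw, rpow_one]
  have hm' : (m : ℝ) * (m : ℝ) ^ ((m : ℝ) / 2 - 1) = (m : ℝ) ^ ((m : ℝ) / 2) := by
    rw [show (m : ℝ) / 2 = 1 + ((m : ℝ) / 2 - 1) by ring, rpow_add hmr, rpow_one]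
    ring_nf
  rw [fW, chisqPDF, if_pos (by positivity), hpow, fWConst, ← hw', ← hm',
    show -((m : ℝ) * w ^ 2) / 2 = -((m : ℝ) / 2) * w ^ 2 by ring]
  ring

lemma fW_nonneg (m : ℕ) {w : ℝ} (hw : 0 ≤ w) : 0 ≤ fW m w := by
  unfold fW chisqPDF
  split_ifs <;> positivity

@[fun_prop]
lemma measurable_fW (m : ℕ) : Measurable (fW m) := by
  unfold fW chisqPDF
  refine (measurable_const.mul measurable_id).mul (Measurable.ite ?_ ?_ measurable_const)
  · exact measurableSet_lt measurable_const (by fun_prop)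
  · fun_prop

lemma integrableOn_fW (hm : 0 < m) : IntegrableOn (fW m) (Ioi 0) := by
  have hmr : (0 : ℝ) < m := by exact_mod_cast hm
  have hgamma := integrableOn_rpow_mul_exp_neg_mul_sq (b := (m : ℝ) / 2) (by positivity)
    (by linarith : (-1 : ℝ) < m - 1)
  refine IntegrableOn.congr_fun (hgamma.const_mul (fWConst m)) (fun w hw => ?_) measurableSet_Ioi
  rw [fW_eq hm hw, mul_assoc]

lemma integral_fW (hm : 0 < m) : ∫ w in Ioi 0, fW m w = 1 := by
  have hmr : (0 : ℝ) < m := by exact_mod_cast hm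
  have hΓ : 0 < Gamma ((m : ℝ) / 2) := Gamma_pos_of_pos (by positivity)
  rw [setIntegral_congr_fun measurableSet_Ioi fun w hw => fW_eq hm hw]
  simp_rw [mul_assoc, integral_const_mul]
  rw [integral_rpow_mul_exp_neg_mul_sq (by linarith) (by positivity), sub_add_cancel,
    neg_div, rpow_neg (by positivity), div_rpow hmr.le zero_le_two, fWConst]
  field_simp

end fW

lemma setIntegral_mul_stdPDF_mul_fW {m : ℕ} (hm : 0 < m) (x : ℝ) :
    ∫ w in Ioi 0, w * stdPDF (w * x) * fW m w = tPDF m x := by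
  have hmr : (0 : ℝ) < m := by exact_mod_cast hm
  have hP : 0 < 1 + x ^ 2 / m := by positivity
  have hintegrand : ∀ w ∈ Ioi (0 : ℝ), w * stdPDF (w * x) * fW m w =
      (√(2 * π))⁻¹ * fWConst m *
        (w ^ (m : ℝ) * exp (-((m : ℝ) / 2 * (1 + x ^ 2 / m)) * w ^ 2)) := by
    intro w hw
    have hpow : w ^ (m : ℝ) = w * w ^ ((m : ℝ) - 1) := by
      rw [← rpow_one_add' hw.le (by simpa using hmr.ne'), add_sub_cancel]
    have hexp : exp (-((m : ℝ) / 2 * (1 + x ^ 2 / m)) * w ^ 2) =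
        exp (-(w * x) ^ 2 / 2) * exp (-((m : ℝ) / 2) * w ^ 2) := by
      rw [← exp_add]
      congr 1
      field_simp
      ring
    rw [fW_eq hm hw, stdPDF, hpow, hexp]
    ring
  rw [setIntegral_congr_fun measurableSet_Ioi hintegrand, integral_const_mul,
    integral_rpow_mul_exp_neg_mul_sq (by linarith) (by positivity),
    mul_rpow (by positivity) hP.le, div_rpow hmr.le zero_le_two, tPDF, fWConst,
    show -(((m : ℝ) + 1) / 2) = -((m : ℝ) + 1) / 2 by ring]
  have hm_pow : (m : ℝ) ^ ((m : ℝ) / 2) * (m : ℝ) ^ (-((m : ℝ) + 1) / 2) = (√m)⁻¹ := by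
    rw [← rpow_add hmr, sqrt_eq_rpow, ← rpow_neg hmr.le]
    ring_nf
  have htwo_pow : (2 : ℝ) ^ ((m : ℝ) / 2) * 2 ^ (-((m : ℝ) + 1) / 2) = (√2)⁻¹ := by
    rw [← rpow_add two_pos, sqrt_eq_rpow, ← rpow_neg zero_le_two]
    ring_nf
  calc _ = (√(2 * π))⁻¹ * ((m : ℝ) ^ ((m : ℝ) / 2) * (m : ℝ) ^ (-((m : ℝ) + 1) / 2)) /
        ((2 : ℝ) ^ ((m : ℝ) / 2) * 2 ^ (-((m : ℝ) + 1) / 2)) / Gamma ((m : ℝ) / 2) *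
        Gamma (((m : ℝ) + 1) / 2) * (1 + x ^ 2 / m) ^ (-((m : ℝ) + 1) / 2) := by ring
    _ = _ := by
      rw [hm_pow, htwo_pow, sqrt_mul zero_le_two, sqrt_mul hmr.le]
      field_simp

lemma two_mul_stdCDF_mul_sub_one {w t : ℝ} (hw : 0 < w) (ht : 0 ≤ t) :
    2 * stdCDF (w * t) - 1 = ∫ x in Ioo (-t) t, w * stdPDF (w * x) := by
  rw [two_mul_stdCDF_sub_one (by positivity), ← integral_Ioc_eq_integral_Ioo,
    ← integral_Ioc_eq_integral_Ioo, ← intervalIntegral.integral_of_le (neg_le_self (by positivity)),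
    ← intervalIntegral.integral_of_le (neg_le_self ht), intervalIntegral.integral_const_mul,
    intervalIntegral.mul_integral_comp_mul_left, mul_neg]

lemma setIntegral_two_mul_stdCDF_mul_sub_one_mul_fW {m : ℕ} (hm : 0 < m) {t : ℝ} (ht : 0 ≤ t) :
    ∫ w in Ioi 0, (2 * stdCDF (w * t) - 1) * fW m w = ∫ x in Ioo (-t) t, tPDF m x := by
  set f : ℝ → ℝ → ℝ := fun w x => w * stdPDF (w * x) * fW m w
  have hf_nonneg : ∀ w ∈ Ioi (0 : ℝ), ∀ x, 0 ≤ f w x := fun w hw x =>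
    mul_nonneg (mul_nonneg (le_of_lt hw) (stdPDF_pos _).le) (fW_nonneg m (le_of_lt hw))
  have hslice : ∀ w ∈ Ioi (0 : ℝ),
      ∫ x in Ioo (-t) t, f w x = (2 * stdCDF (w * t) - 1) * fW m w :=
    fun w hw => by rw [two_mul_stdCDF_mul_sub_one hw ht, integral_mul_const]
  have hmeas : Measurable (Function.uncurry f) := by
    simp only [f, Function.uncurry_def]
    fun_prop
  have hint : Integrable (Function.uncurry f)
      ((volume.restrict (Ioi 0)).prod (volume.restrict (Ioo (-t) t))) := by
    refine (integrable_prod_iff hmeas.aestronglyMeasurable).2 ⟨.of_forall fun w => ?_, ?_⟩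
    · have hcont : Continuous fun x => f w x := by simp only [f]; fun_prop
      exact hcont.integrableOn_Ioc.mono_set Ioo_subset_Ioc_self
    · refine (integrableOn_fW hm).mono' hmeas.norm.aestronglyMeasurable.integral_prod_right' ?_
      filter_upwards [ae_restrict_mem measurableSet_Ioi] with w hw
      have hnorm : ∫ x in Ioo (-t) t, ‖f w x‖ = ∫ x in Ioo (-t) t, f w x :=
        integral_congr_ae (.of_forall fun x => norm_of_nonneg (hf_nonneg w hw x))
      have hfW := fW_nonneg m (le_of_lt hw)
      have hΦ := abs_two_mul_stdCDF_sub_one_le (w * t)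
      simp only [Function.uncurry_apply_pair, norm_eq_abs] at hnorm ⊢
      rw [hnorm, hslice w hw, abs_mul, abs_of_nonneg hfW]
      exact mul_le_of_le_one_left hfW hΦ
  calc ∫ w in Ioi 0, (2 * stdCDF (w * t) - 1) * fW m w
      = ∫ w in Ioi 0, ∫ x in Ioo (-t) t, f w x :=
        setIntegral_congr_fun measurableSet_Ioi fun w hw => (hslice w hw).symm
    _ = ∫ x in Ioo (-t) t, ∫ w in Ioi 0, f w x := integral_integral_swap hint
    _ = ∫ x in Ioo (-t) t, tPDF m x :=
        setIntegral_congr_fun measurableSet_Ioo fun x _ => setIntegral_mul_stdPDF_mul_fW hm x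

section cov0

variable {m : ℕ} {s : ℝ → ℝ}

lemma integrableOn_mul_fW (hm : 0 < m) {g : ℝ → ℝ} (hg : AEStronglyMeasurable g)
    (hg_le : ∀ w, |g w| ≤ 1) : IntegrableOn (fun w => g w * fW m w) (Ioi 0) :=
  (integrableOn_fW hm).bdd_mul hg.restrict (.of_forall hg_le)

lemma measurable_coverage_integrand (hs : Measurable s) (γ : ℝ) :
    Measurable (Function.uncurry fun w h =>
      (2 * stdCDF (w * s (|h| / w)) - 1) * stdPDF (h - γ)) := by
  simp only [Function.uncurry_def]
  fun_prop

lemma integrable_coverage_integrand (hs : Measurable s) (w γ : ℝ) :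
    Integrable fun h => (2 * stdCDF (w * s (|h| / w)) - 1) * stdPDF (h - γ) :=
  (integrable_stdPDF.comp_sub_right γ).bdd_mul (by fun_prop : Measurable _).aestronglyMeasurable
    (.of_forall fun _ => abs_two_mul_stdCDF_sub_one_le _)

lemma abs_integral_coverage_integrand_le (hs : Measurable s) (w γ : ℝ) :
    |∫ h, (2 * stdCDF (w * s (|h| / w)) - 1) * stdPDF (h - γ)| ≤ 1 :=
  calc |∫ h, (2 * stdCDF (w * s (|h| / w)) - 1) * stdPDF (h - γ)|
      ≤ ∫ h, |(2 * stdCDF (w * s (|h| / w)) - 1) * stdPDF (h - γ)| :=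
        abs_integral_le_integral_abs
    _ ≤ ∫ h, stdPDF (h - γ) :=
        integral_mono (integrable_coverage_integrand hs w γ).abs
          (integrable_stdPDF.comp_sub_right γ) fun h => by
          rw [abs_mul, abs_of_pos (stdPDF_pos _)]
          exact mul_le_of_le_one_left (stdPDF_pos _).le (abs_two_mul_stdCDF_sub_one_le _)
    _ = 1 := integral_stdPDF_sub γ

lemma cov0_mono (hm : 0 < m) {s₁ s₂ : ℝ → ℝ} (hs₁ : Measurable s₁) (hs₂ : Measurable s₂)
    (hle : ∀ x, 0 ≤ x → s₁ x ≤ s₂ x) (γ : ℝ) : cov0 m s₁ γ ≤ cov0 m s₂ γ := by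
  have hint {s : ℝ → ℝ} (hs : Measurable s) := integrableOn_mul_fW hm
    (measurable_coverage_integrand hs γ).aestronglyMeasurable.integral_prod_right'
    (abs_integral_coverage_integrand_le hs · γ)
  refine setIntegral_mono_on (hint hs₁) (hint hs₂) measurableSet_Ioi fun w hw => ?_
  refine mul_le_mul_of_nonneg_right ?_ (fW_nonneg m (le_of_lt hw))
  refine integral_mono (integrable_coverage_integrand hs₁ w γ)
    (integrable_coverage_integrand hs₂ w γ) fun h => ?_
  refine mul_le_mul_of_nonneg_right ?_ (stdPDF_pos _).le
  have hsw := hle (|h| / w) (div_nonneg (abs_nonneg h) (le_of_lt hw))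
  have := stdCDF_mono (mul_le_mul_of_nonneg_left hsw (le_of_lt hw))
  linarith

lemma cov0_const (c γ : ℝ) :
    cov0 m (fun _ => c) γ = ∫ w in Ioi 0, (2 * stdCDF (w * c) - 1) * fW m w := by
  refine setIntegral_congr_fun measurableSet_Ioi fun w _ => ?_
  rw [integral_const_mul, integral_stdPDF_sub, mul_one]

lemma cov0_const_eq_integral_tPDF (hm : 0 < m) {t : ℝ} (ht : 0 ≤ t) (γ : ℝ) :
    cov0 m (fun _ => t) γ = ∫ x in Ioo (-t) t, tPDF m x := by
  rw [cov0_const, setIntegral_two_mul_stdCDF_mul_sub_one_mul_fW hm ht]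

lemma cov0_const_mul_sub_cov0_const_le (hm : 0 < m) {k t : ℝ} (hk : 1 ≤ k) (ht : 0 ≤ t)
    (γ : ℝ) :
    cov0 m (fun _ => k * t) γ - cov0 m (fun _ => t) γ ≤ 2 * (k - 1) * (√(2 * π))⁻¹ := by
  have hint (c : ℝ) := integrableOn_mul_fW hm (g := fun w => 2 * stdCDF (w * c) - 1)
    (by fun_prop : Measurable _).aestronglyMeasurable (abs_two_mul_stdCDF_sub_one_le <| · * c)
  rw [cov0_const, cov0_const, ← integral_sub (hint _) (hint _)]
  calc ∫ w in Ioi 0, (2 * stdCDF (w * (k * t)) - 1) * fW m w - (2 * stdCDF (w * t) - 1) * fW m w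
      ≤ ∫ w in Ioi 0, 2 * (k - 1) * (√(2 * π))⁻¹ * fW m w := by
        refine setIntegral_mono_on ((hint _).sub (hint _)) ((integrableOn_fW hm).const_mul _)
          measurableSet_Ioi fun w hw => ?_
        have hΦ := stdCDF_mul_sub_stdCDF_le hk (mul_nonneg (le_of_lt hw) ht)
        rw [mul_left_comm] at hΦ
        have hfW := fW_nonneg m (le_of_lt hw)
        nlinarith
    _ = 2 * (k - 1) * (√(2 * π))⁻¹ := by rw [integral_const_mul, integral_fW hm, mul_one]

end cov0

section smin

variable {m : ℕ} {t d x : ℝ}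

lemma le_smin (ht : 0 ≤ t) : t ≤ smin m t d x := by
  unfold smin
  split_ifs
  · exact le_mul_of_one_le_left ht (one_le_sqrt.2 (le_add_of_nonneg_right (by positivity)))
  · exact le_rfl

lemma smin_le (ht : 0 ≤ t) (hx : 0 ≤ x) : smin m t d x ≤ √(1 + d ^ 2 / m) * t := by
  unfold smin
  split_ifs
  · gcongr
  · exact le_mul_of_one_le_left ht (one_le_sqrt.2 (le_add_of_nonneg_right (by positivity)))

lemma measurable_smin (m : ℕ) (t d : ℝ) : Measurable (smin m t d) := by
  unfold smin
  exact Measurable.ite (measurableSet_lt measurable_id measurable_const) (by fun_prop)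
    measurable_const

end smin

theorem stmt12_general (α : ℝ) (d : ℝ)
    (tm : ℕ → ℝ)
    (htm : ∀ m : ℕ, 0 < m → 0 < tm m ∧ ∫ x in Set.Ioo (-(tm m)) (tm m), tPDF m x = 1 - α) :
    (∀ m : ℕ, 0 < m →
        0 ≤ cov0 m (smin m (tm m) d) 0 - (1 - α) ∧
          cov0 m (smin m (tm m) d) 0 - (1 - α)
            ≤ cov0 m (fun _ => Real.sqrt (1 + d ^ 2 / m) * tm m) 0 - (1 - α)) ∧
      Tendsto (fun m : ℕ => cov0 m (smin m (tm m) d) 0 - (1 - α)) atTop (nhds 0) := by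
  have hexact (m : ℕ) (hm : 0 < m) : cov0 m (fun _ => tm m) 0 = 1 - α := by
    rw [cov0_const_eq_integral_tPDF hm (htm m hm).1.le, (htm m hm).2]
  have hbounds (m : ℕ) (hm : 0 < m) :
      0 ≤ cov0 m (smin m (tm m) d) 0 - (1 - α) ∧
        cov0 m (smin m (tm m) d) 0 - (1 - α)
          ≤ cov0 m (fun _ => √(1 + d ^ 2 / m) * tm m) 0 - (1 - α) := by
    have ht := (htm m hm).1.le
    rw [← hexact m hm]
    exact ⟨sub_nonneg.2 (cov0_mono hm measurable_const (measurable_smin _ _ _)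
        (fun _ _ => le_smin ht) 0),
      sub_le_sub_right (cov0_mono hm (measurable_smin _ _ _) measurable_const
        (fun _ hx => smin_le ht hx) 0) _⟩
  refine ⟨hbounds, ?_⟩
  have hk : Tendsto (fun m : ℕ => √(1 + d ^ 2 / m)) atTop (nhds 1) := by
    simpa using ((tendsto_const_div_atTop_nhds_zero_nat (d ^ 2)).const_add 1).sqrt
  have hgap :
      Tendsto (fun m : ℕ => 2 * (√(1 + d ^ 2 / m) - 1) * (√(2 * π))⁻¹) atTop (nhds 0) := by
    simpa using ((hk.sub_const 1).const_mul 2).mul_const (√(2 * π))⁻¹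
  refine tendsto_of_tendsto_of_tendsto_of_le_of_le' tendsto_const_nhds hgap ?_ ?_
  · filter_upwards [eventually_gt_atTop 0] with m hm using (hbounds m hm).1
  · filter_upwards [eventually_gt_atTop 0] with m hm
    calc cov0 m (smin m (tm m) d) 0 - (1 - α)
        ≤ cov0 m (fun _ => √(1 + d ^ 2 / m) * tm m) 0 - cov0 m (fun _ => tm m) 0 := by
          rw [hexact m hm]
          exact (hbounds m hm).2
      _ ≤ 2 * (√(1 + d ^ 2 / m) - 1) * (√(2 * π))⁻¹ :=
          cov0_const_mul_sub_cov0_const_le hm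
            (one_le_sqrt.2 (le_add_of_nonneg_right (by positivity))) (htm m hm).1.le 0

theorem stmt12 (α : ℝ) (hα : α ∈ Set.Ioo (0 : ℝ) 1) (d : ℝ) (hd : 0 < d)
    (tm : ℕ → ℝ)
    (htm : ∀ m : ℕ, 0 < m → 0 < tm m ∧ ∫ x in Set.Ioo (-(tm m)) (tm m), tPDF m x = 1 - α) :
    (∀ m : ℕ, 0 < m →
        0 ≤ cov0 m (smin m (tm m) d) 0 - (1 - α) ∧
          cov0 m (smin m (tm m) d) 0 - (1 - α)
            ≤ cov0 m (fun _ => Real.sqrt (1 + d ^ 2 / m) * tm m) 0 - (1 - α)) ∧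
      Tendsto (fun m : ℕ => cov0 m (smin m (tm m) d) 0 - (1 - α)) atTop (nhds 0) :=
  stmt12_general α d tm htm
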